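/- The one-parameter family of Lie-Yamaguti algebra structures 𝓛₄₄^α (α ∈ ℂ) on ℂ⁴, where 𝓛₄₄^α is given by [e₁,e₂]=e₃+e₄, [e₁,e₃]=α e₄, [e₂,e₃]=e₄, [e₁,e₂,e₁]=e₃, [e₁,e₂,e₃]=−e₄, [e₁,e₃,e₂]=−e₄, degenerates (as a parametric family) to the structure 𝓛₃₄ given by [e₁,e₂]=e₄, [e₁,e₃]=e₄, [e₁,e₂,e₁]=e₃, [e₁,e₂,e₃]=e₄, [e₁,e₃,e₂]=e₄. -/
import Mathlib


open Filter Matrix Topology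

/-- ℂ⁴ -/
abbrev V4 : Type := Fin 4 → ℂ

/-- GL₄(ℂ) -/
abbrev GL4 := Matrix.GeneralLinearGroup (Fin 4) ℂ

/-- structure constants of a bilinear map on ℂ⁴: `μ i j` is the value on `(eᵢ, eⱼ)`. -/
abbrev Bil4 := Fin 4 → Fin 4 → V4

/-- structure constants of a trilinear map on ℂ⁴. -/
abbrev Tril4 := Fin 4 → Fin 4 → Fin 4 → V4

/-- standard basis vectors -/
noncomputable def e4 (k : Fin 4) : V4 := Pi.single k (1 : ℂ)

/-- action of `g ∈ GL₄(ℂ)` on a bilinear map: `(g·μ)(x,y) = g μ(g⁻¹x, g⁻¹y)`,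
in structure constants. -/
noncomputable def actBil (g : GL4) (μ : Bil4) : Bil4 := fun i j =>
  (g : Matrix (Fin 4) (Fin 4) ℂ).mulVec
    (∑ p, ∑ q,
      (((g⁻¹ : GL4) : Matrix (Fin 4) (Fin 4) ℂ) p i *
       ((g⁻¹ : GL4) : Matrix (Fin 4) (Fin 4) ℂ) q j) • μ p q)

/-- action of `g ∈ GL₄(ℂ)` on a trilinear map:
`(g·τ)(x,y,z) = g τ(g⁻¹x, g⁻¹y, g⁻¹z)`, in structure constants. -/
noncomputable def actTril (g : GL4) (τ : Tril4) : Tril4 := fun i j k =>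
  (g : Matrix (Fin 4) (Fin 4) ℂ).mulVec
    (∑ p, ∑ q, ∑ r,
      (((g⁻¹ : GL4) : Matrix (Fin 4) (Fin 4) ℂ) p i *
       ((g⁻¹ : GL4) : Matrix (Fin 4) (Fin 4) ℂ) q j *
       ((g⁻¹ : GL4) : Matrix (Fin 4) (Fin 4) ℂ) r k) • τ p q r)

/-- the parametric family `(μ_α, τ_α)` degenerates to `(lam,sig)`: there are maps
`f : ℂ∖{0} → ℂ` and `g : ℂ∖{0} → GL₄(ℂ)` with `g(t)·μ_{f(t)} → lam`
and `g(t)·τ_{f(t)} → sig` as `t → 0`. -/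
def DegeneratesFam (μ : ℂ → Bil4) (τ : ℂ → Tril4) (lam : Bil4) (sig : Tril4) : Prop :=
  ∃ f : ℂ → ℂ, ∃ g : ℂ → GL4,
    Tendsto (fun t => actBil (g t) (μ (f t))) (𝓝[≠] (0 : ℂ)) (𝓝 lam) ∧
    Tendsto (fun t => actTril (g t) (τ (f t))) (𝓝[≠] (0 : ℂ)) (𝓝 sig)

noncomputable def μL44 (α : ℂ) : Bil4 := fun i j =>
  if i = (0 : Fin 4) ∧ j = (1 : Fin 4) then e4 2 + e4 3
  else if i = (1 : Fin 4) ∧ j = (0 : Fin 4) then -(e4 2 + e4 3)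
  else if i = (0 : Fin 4) ∧ j = (2 : Fin 4) then α • e4 3
  else if i = (2 : Fin 4) ∧ j = (0 : Fin 4) then -(α • e4 3)
  else if i = (1 : Fin 4) ∧ j = (2 : Fin 4) then e4 3
  else if i = (2 : Fin 4) ∧ j = (1 : Fin 4) then -(e4 3)
  else 0

noncomputable def τL44 : Tril4 := fun i j k =>
  if i = (0 : Fin 4) ∧ j = (1 : Fin 4) ∧ k = (0 : Fin 4) then e4 2
  else if i = (1 : Fin 4) ∧ j = (0 : Fin 4) ∧ k = (0 : Fin 4) then -(e4 2)
  else if i = (0 : Fin 4) ∧ j = (1 : Fin 4) ∧ k = (2 : Fin 4) then -(e4 3)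
  else if i = (1 : Fin 4) ∧ j = (0 : Fin 4) ∧ k = (2 : Fin 4) then -(-(e4 3))
  else if i = (0 : Fin 4) ∧ j = (2 : Fin 4) ∧ k = (1 : Fin 4) then -(e4 3)
  else if i = (2 : Fin 4) ∧ j = (0 : Fin 4) ∧ k = (1 : Fin 4) then -(-(e4 3))
  else 0

noncomputable def μL34 : Bil4 := fun i j =>
  if i = (0 : Fin 4) ∧ j = (1 : Fin 4) then e4 3
  else if i = (1 : Fin 4) ∧ j = (0 : Fin 4) then -(e4 3)
  else if i = (0 : Fin 4) ∧ j = (2 : Fin 4) then e4 3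
  else if i = (2 : Fin 4) ∧ j = (0 : Fin 4) then -(e4 3)
  else 0

noncomputable def τL34 : Tril4 := fun i j k =>
  if i = (0 : Fin 4) ∧ j = (1 : Fin 4) ∧ k = (0 : Fin 4) then e4 2
  else if i = (1 : Fin 4) ∧ j = (0 : Fin 4) ∧ k = (0 : Fin 4) then -(e4 2)
  else if i = (0 : Fin 4) ∧ j = (1 : Fin 4) ∧ k = (2 : Fin 4) then e4 3
  else if i = (1 : Fin 4) ∧ j = (0 : Fin 4) ∧ k = (2 : Fin 4) then -(e4 3)
  else if i = (0 : Fin 4) ∧ j = (2 : Fin 4) ∧ k = (1 : Fin 4) then e4 3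
  else if i = (2 : Fin 4) ∧ j = (0 : Fin 4) ∧ k = (1 : Fin 4) then -(e4 3)
  else 0

noncomputable def gmat (t : ℂ) (ht : t ≠ 0) : GL4 :=
  { val := Matrix.diagonal ![t, -1/t^2, -1, -1/t]
    inv := Matrix.diagonal ![1/t, -t^2, -1, -t]
    val_inv := by
      rw [Matrix.diagonal_mul_diagonal]
      ext i j
      fin_cases i <;> fin_cases j <;>
        simp [Matrix.diagonal, Matrix.one_apply] <;> field_simp
    inv_val := by
      rw [Matrix.diagonal_mul_diagonal]
      ext i j
      fin_cases i <;> fin_cases j <;>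
        simp [Matrix.diagonal, Matrix.one_apply] <;> field_simp }

noncomputable def Cb : Bil4 := fun i j =>
  if i = (0 : Fin 4) ∧ j = (1 : Fin 4) then e4 2
  else if i = (1 : Fin 4) ∧ j = (0 : Fin 4) then -(e4 2)
  else if i = (1 : Fin 4) ∧ j = (2 : Fin 4) then -(e4 3)
  else if i = (2 : Fin 4) ∧ j = (1 : Fin 4) then e4 3
  else 0

lemma sum_diag_bil (d' : Fin 4 → ℂ) (μ : Bil4) (i j : Fin 4) :
    (∑ p, ∑ q, ((Matrix.diagonal d') p i * (Matrix.diagonal d') q j) • μ p q)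
      = (d' i * d' j) • μ i j := by
  rw [Finset.sum_eq_single i]
  · rw [Finset.sum_eq_single j]
    · simp [Matrix.diagonal_apply_eq]
    · intro b _ hb; simp [Matrix.diagonal_apply_ne _ hb]
    · simp
  · intro b _ hb; simp [Matrix.diagonal_apply_ne _ hb]
  · simp

lemma sum_diag_tril (d' : Fin 4 → ℂ) (τ : Tril4) (i j k : Fin 4) :
    (∑ p, ∑ q, ∑ r, ((Matrix.diagonal d') p i * (Matrix.diagonal d') q j *
        (Matrix.diagonal d') r k) • τ p q r)
      = (d' i * d' j * d' k) • τ i j k := by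
  rw [Finset.sum_eq_single i]
  · rw [Finset.sum_eq_single j]
    · rw [Finset.sum_eq_single k]
      · simp [Matrix.diagonal_apply_eq]
      · intro b _ hb; simp [Matrix.diagonal_apply_ne _ hb]
      · simp
    · intro b _ hb; simp [Matrix.diagonal_apply_ne _ hb]
    · simp
  · intro b _ hb; simp [Matrix.diagonal_apply_ne _ hb]
  · simp

lemma mulVec_diag (d : Fin 4 → ℂ) (v : V4) :
    (Matrix.diagonal d).mulVec v = fun m => d m * v m := by
  funext m; simp [Matrix.mulVec_diagonal]

set_option maxHeartbeats 1000000 in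
lemma bil_eq (t : ℂ) (ht : t ≠ 0) :
    actBil (gmat t ht) (μL44 (t^2)) = μL34 + t • Cb := by
  have hv : ((gmat t ht : GL4) : Matrix (Fin 4) (Fin 4) ℂ) = Matrix.diagonal ![t, -1/t^2, -1, -1/t] := rfl
  have hi : (((gmat t ht)⁻¹ : GL4) : Matrix (Fin 4) (Fin 4) ℂ) = Matrix.diagonal ![1/t, -t^2, -1, -t] := rfl
  funext i j
  rw [show actBil (gmat t ht) (μL44 (t^2)) i j
      = (Matrix.diagonal ![t, -1/t^2, -1, -1/t]).mulVec
        ((![1/t, -t^2, -1, -t] i * ![1/t, -t^2, -1, -t] j) • μL44 (t^2) i j) by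
    rw [actBil, hv, hi, sum_diag_bil]]
  rw [Matrix.mulVec_smul, mulVec_diag]
  fin_cases i <;> fin_cases j <;>
    · funext m
      fin_cases m <;>
        simp [μL44, μL34, Cb, e4, Pi.single_apply] <;> field_simp <;> ring

set_option maxHeartbeats 1000000 in
lemma tril_eq (t : ℂ) (ht : t ≠ 0) :
    actTril (gmat t ht) τL44 = τL34 := by
  have hv : ((gmat t ht : GL4) : Matrix (Fin 4) (Fin 4) ℂ) = Matrix.diagonal ![t, -1/t^2, -1, -1/t] := rfl
  have hi : (((gmat t ht)⁻¹ : GL4) : Matrix (Fin 4) (Fin 4) ℂ) = Matrix.diagonal ![1/t, -t^2, -1, -t] := rfl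
  funext i j k
  rw [show actTril (gmat t ht) τL44 i j k
      = (Matrix.diagonal ![t, -1/t^2, -1, -1/t]).mulVec
        ((![1/t, -t^2, -1, -t] i * ![1/t, -t^2, -1, -t] j * ![1/t, -t^2, -1, -t] k) • τL44 i j k) by
    rw [actTril, hv, hi, sum_diag_tril]]
  rw [Matrix.mulVec_smul, mulVec_diag]
  fin_cases i <;> fin_cases j <;> fin_cases k <;>
    · funext m
      fin_cases m <;>
        simp [τL44, τL34, e4, Pi.single_apply] <;> field_simp <;> ring

open Classical in
noncomputable def gfun (t : ℂ) : GL4 :=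
  if ht : t = 0 then 1 else gmat t ht

/-- the family 𝓛₄₄^α degenerates to 𝓛₃₄. -/
theorem stmt7 : DegeneratesFam μL44 (fun _ => τL44) μL34 τL34 := by
  refine ⟨fun t => t^2, gfun, ?_, ?_⟩
  · have hcont : Tendsto (fun t : ℂ => μL34 + t • Cb) (𝓝[≠] (0:ℂ)) (𝓝 μL34) := by
      have : Continuous fun t : ℂ => μL34 + t • Cb := by continuity
      have h0 := (this.tendsto 0).mono_left (nhdsWithin_le_nhds : 𝓝[≠] (0:ℂ) ≤ 𝓝 0)
      simpa using h0
    refine hcont.congr' ?_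
    filter_upwards [self_mem_nhdsWithin] with t ht
    have ht' : t ≠ 0 := ht
    rw [gfun, dif_neg ht', bil_eq t ht']
  · have hcont : Tendsto (fun _ : ℂ => τL34) (𝓝[≠] (0:ℂ)) (𝓝 τL34) := tendsto_const_nhds
    refine hcont.congr' ?_
    filter_upwards [self_mem_nhdsWithin] with t ht
    have ht' : t ≠ 0 := ht
    rw [gfun, dif_neg ht', tril_eq t ht']
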